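/- In the proof of the tree characterization of ≈ on K_1: if the tree T = {σ : s·σ ≄ t·σ} is well-founded, and α_σ denotes the ordinal position of σ ∈ T in the Kleene–Brouwer well-order of T, then s·σ ∼_{α_σ + 1} t·σ for every σ ∈ T. In particular s ∼_α t where α is the order type of (T, <_KB). -/

import Mathlib

/-- A partial applicative structure: a set with a partial binary application. -/
structure PAS where
  carrier : Type
  app : carrier → carrier → Part carrier

namespace PAS

/-- Closed terms over a partial applicative structure. -/
inductive Term (A : PAS) : Type
  | const : A.carrier → Term A
  | app : Term A → Term A → Term A

/-- Evaluation of a closed term (a partial element of the carrier). -/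
def Term.eval {A : PAS} : Term A → Part A.carrier
  | .const a => Part.some a
  | .app s t => do
      let x ← Term.eval s
      let y ← Term.eval t
      A.app x y

/-- Kleene equality of closed terms: both undefined, or both defined and equal. -/
def KEq {A : PAS} (s t : Term A) : Prop := s.eval = t.eval

/-- The transfinite hierarchy of extensionality relations `∼_α` on closed terms:
`s ∼_0 t` iff `s ≃ t`; `s ∼_{α+1} t` iff `∀ x, s·x ∼_α t·x`; and at limits,
`s ∼_α t` iff `s ∼_β t` for some `β < α`. -/
noncomputable def sim (A : PAS) (α : Ordinal) : Term A → Term A → Prop :=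
  Ordinal.limitRecOn α
    (fun s t => KEq s t)
    (fun _ ih s t => ∀ x : A.carrier, ih (s.app (.const x)) (t.app (.const x)))
    (fun β _ ih s t => ∃ γ, ∃ h : γ < β, ih γ h s t)

end PAS

/-- A partial combinatory algebra: a partial applicative structure with
combinators `K` and `S` such that `K·a·b = a`, `S·a·b` is defined, and
`S·a·b·c ≃ a·c·(b·c)`. -/
structure PCA extends PAS where
  K : carrier
  S : carrier
  K_spec : ∀ a b : carrier, (app K a).bind (fun x => app x b) = Part.some a
  S_defined : ∀ a b : carrier, ((app S a).bind (fun x => app x b)).Dom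
  S_spec : ∀ a b c : carrier,
    ((app S a).bind (fun x => app x b)).bind (fun x => app x c)
      = (app a c).bind (fun u => (app b c).bind (fun v => app u v))

/-- Kleene's first model: the pca on ω with application n·m = Φ_n(m). -/
def K1 : PAS :=
  ⟨ℕ, fun n m => (Denumerable.ofNat Nat.Partrec.Code n).eval m⟩

/-- Iterated application of a term to a finite list of elements: t·σ(0)·…·σ(k-1). -/
def PAS.Term.appList {A : PAS} (t : PAS.Term A) (σ : List A.carrier) : PAS.Term A :=
  σ.foldl (fun s x => s.app (.const x)) t

/-- An element is hereditarily total if every iterated application to elements is defined. -/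
def PAS.HeredTotal (A : PAS) (a : A.carrier) : Prop :=
  ∀ σ : List A.carrier, ((PAS.Term.const a).appList σ).eval.Dom

/-- The Kleene–Brouwer ordering on finite strings: τ <KB σ iff τ properly extends σ,
or τ is to the left of σ at the first point of difference. -/
def KBlt (τ σ : List ℕ) : Prop :=
  (σ <+: τ ∧ σ ≠ τ) ∨
    ∃ n : ℕ, n < τ.length ∧ n < σ.length ∧ τ.take n = σ.take n ∧ τ.getD n 0 < σ.getD n 0

/-!
Induction along the Kleene–Brouwer well-order of `T`. For `σ ∈ T` and any `x`, either
`σ⌢x ∉ T`, so that `s·σ·x ≃ t·σ·x` and these terms are `∼_β` for every `β`, or `σ⌢x ∈ T`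
lies KB-below `σ`, so that by induction `s·σ·x ∼_{α_{σ⌢x}+1} t·σ·x` with
`α_{σ⌢x} + 1 ≤ α_σ`. As `∼_β` is monotone in `β`, this gives `s·σ ∼_{α_σ+1} t·σ`; the
claim about `s` and `t` is the case of the root, where `α_∅ + 1 ≤ α`.
-/

namespace PAS

variable {A : PAS}

theorem sim_zero (s t : A.Term) : A.sim 0 s t ↔ KEq s t := by
  rw [sim, Ordinal.limitRecOn_zero]

theorem sim_add_one (α : Ordinal) (s t : A.Term) :
    A.sim (α + 1) s t ↔ ∀ x : A.carrier, A.sim α (s.app (.const x)) (t.app (.const x)) := by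
  rw [sim, Ordinal.limitRecOn_add_one]
  rfl

theorem sim_iff_of_isSuccLimit {α : Ordinal} (hα : Order.IsSuccLimit α) (s t : A.Term) :
    A.sim α s t ↔ ∃ β < α, A.sim β s t := by
  rw [sim, Ordinal.limitRecOn_limit _ _ _ _ hα]
  simp only [exists_prop]
  rfl

theorem KEq.app {s t : A.Term} (h : KEq s t) (c : A.Term) : KEq (s.app c) (t.app c) := by
  simp only [KEq, Term.eval] at h ⊢
  rw [h]

theorem sim_app_const {α : Ordinal} {s t : A.Term} (h : A.sim α s t) (x : A.carrier) :
    A.sim α (s.app (.const x)) (t.app (.const x)) := by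
  induction α using Ordinal.limitRecOn generalizing s t x with
  | zero => exact (sim_zero _ _).2 (((sim_zero _ _).1 h).app _)
  | add_one α ih => exact (sim_add_one _ _ _).2 fun y => ih ((sim_add_one _ _ _).1 h x) y
  | limit α hα ih =>
    obtain ⟨β, hβ, hsim⟩ := (sim_iff_of_isSuccLimit hα _ _).1 h
    exact (sim_iff_of_isSuccLimit hα _ _).2 ⟨β, hβ, ih β hβ hsim x⟩

theorem KEq.sim {s t : A.Term} (h : KEq s t) (α : Ordinal) : A.sim α s t := by
  induction α using Ordinal.limitRecOn generalizing s t with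
  | zero => exact (sim_zero _ _).2 h
  | add_one α ih => exact (sim_add_one _ _ _).2 fun x => ih (h.app _)
  | limit α hα ih => exact (sim_iff_of_isSuccLimit hα _ _).2 ⟨0, hα.pos, ih 0 hα.pos h⟩

theorem sim_mono {α β : Ordinal} (hβα : β ≤ α) {s t : A.Term} (h : A.sim β s t) :
    A.sim α s t := by
  induction α using Ordinal.limitRecOn with
  | zero => rwa [nonpos_iff_eq_zero.mp hβα] at h
  | add_one α ih =>
    rcases hβα.eq_or_lt with rfl | hlt
    · exact h
    · exact (sim_add_one _ _ _).2 (sim_app_const (ih (Order.lt_add_one_iff.mp hlt)))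
  | limit α hα =>
    rcases hβα.eq_or_lt with rfl | hlt
    · exact h
    · exact (sim_iff_of_isSuccLimit hα _ _).2 ⟨β, hlt, h⟩

theorem Term.appList_concat (s : A.Term) (σ : List A.carrier) (x : A.carrier) :
    s.appList (σ.concat x) = (s.appList σ).app (.const x) := by
  simp [Term.appList]

theorem sim_typein_add_one {s t : A.Term}
    (r : {σ // ¬KEq (s.appList σ) (t.appList σ)} → {σ // ¬KEq (s.appList σ) (t.appList σ)} → Prop)
    [IsWellOrder _ r] (hr : ∀ σ x hσ hσx, r ⟨σ.concat x, hσx⟩ ⟨σ, hσ⟩) (σ) :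
    A.sim (Ordinal.typein r σ + 1) (s.appList σ.1) (t.appList σ.1) := by
  induction σ using IsWellFounded.induction r with
  | ind σ ih =>
    refine (sim_add_one _ _ _).2 fun x => ?_
    rw [← Term.appList_concat, ← Term.appList_concat]
    by_cases hσx : KEq (s.appList (σ.1.concat x)) (t.appList (σ.1.concat x))
    · exact hσx.sim _
    · have hlt := hr σ.1 x σ.2 hσx
      refine sim_mono ?_ (ih _ hlt)
      exact Order.add_one_le_of_lt ((Ordinal.typein_lt_typein r).2 hlt)

theorem sim_type {s t : A.Term}
    (r : {σ // ¬KEq (s.appList σ) (t.appList σ)} → {σ // ¬KEq (s.appList σ) (t.appList σ)} → Prop)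
    [IsWellOrder _ r] (hr : ∀ σ x hσ hσx, r ⟨σ.concat x, hσx⟩ ⟨σ, hσ⟩) :
    A.sim (Ordinal.type r) s t := by
  by_cases hroot : KEq (s.appList []) (t.appList [])
  · exact hroot.sim _
  · exact sim_mono (Order.add_one_le_of_lt (Ordinal.typein_lt_type r _))
      (sim_typein_add_one r hr ⟨[], hroot⟩)

end PAS

theorem KBlt_append_of_ne_nil {σ τ : List ℕ} (hτ : τ ≠ []) : KBlt (σ ++ τ) σ :=
  Or.inl ⟨List.prefix_append σ τ, fun h => hτ (List.append_right_eq_self.mp h.symm)⟩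

/-- If the tree T = {σ : s·σ ≄ t·σ} is well-ordered by the Kleene–Brouwer
order (i.e. well-founded), and α_σ is the ordinal position of σ ∈ T in this well-order,
then s·σ ∼_{α_σ + 1} t·σ for every σ ∈ T; in particular s ∼_α t where α is the order
type of (T, <KB). -/
theorem stmt10 (s t : K1.Term)
    (hwo : IsWellOrder {σ : List ℕ // ¬ PAS.KEq (s.appList σ) (t.appList σ)}
      (fun τ σ => KBlt τ.1 σ.1)) :
    (∀ (σ : List ℕ) (h : ¬ PAS.KEq (s.appList σ) (t.appList σ)),
      K1.sim ((@Ordinal.typein {σ : List ℕ // ¬ PAS.KEq (s.appList σ) (t.appList σ)} (fun τ σ => KBlt τ.1 σ.1) hwo) ⟨σ, h⟩ + 1)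
        (s.appList σ) (t.appList σ)) ∧
    K1.sim (@Ordinal.type {σ : List ℕ // ¬ PAS.KEq (s.appList σ) (t.appList σ)} (fun τ σ => KBlt τ.1 σ.1) hwo) s t := by
  have hr (σ : List ℕ) (x : ℕ) : KBlt (σ.concat x) σ := by
    rw [List.concat_eq_append]
    exact KBlt_append_of_ne_nil (List.cons_ne_nil x [])
  constructor
  · exact fun σ h => @PAS.sim_typein_add_one K1 s t _ hwo (fun σ x _ _ => hr σ x) ⟨σ, h⟩
  · exact @PAS.sim_type K1 s t _ hwo fun σ x _ _ => hr σ x
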